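/- arXiv:hep-th/9411084 — 10 statements merged into one kernel-verified Lean document; each statement's English description precedes it below -/
import Mathlib

section
/- Let M be a von Neumann algebra acting on a Hilbert space H with cyclic separating vector Ω, let N ⊆ M be a von Neumann subalgebra with Ω cyclic and separating for N, let J_N, J_M be the respective modular conjugations, and define γ = Ad(J_N J_M). If w' is an isometry in N' satisfying J_M w' J_N = w', then w = J_N w' J_N lies in N, is an isometry (w* w = 1), w w* = J_N w' w'* J_N, and w satisfies the intertwining relation w n = γ(n) w for all n ∈ N. -/
/-!
Conjugation by the antiunitary involution `JN` is multiplicative and commutes with taking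
adjoints, so `w = JN w' JN` inherits the isometry property of `w'` and `w w*` is the conjugate
of `w' w'*`; Tomita's theorem puts `w` in `N`.  The relation `JM w' JN = w'` rewritten as
`JM w' = w' JN` lets `w'` pass through `JN JM`, and commuting `w'` with `n ∈ N` then gives
`w n = γ(n) w`.
-/

open Function

section Conjugation

variable {α : Type*} {J : α → α}

theorem conj_comp_conj (hJ : Involutive J) {a b c d : α → α}
    (hb : ∀ ξ, b ξ = J (a (J ξ))) (hd : ∀ ξ, d ξ = J (c (J ξ))) (ξ : α) :
    b (d ξ) = J (a (c (J ξ))) := by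
  rw [hb, hd, hJ]

theorem conj_intertwines_of_commute {J' v n w : α → α} (hJ : Involutive J)
    (hvn : ∀ ξ, v (n ξ) = n (v ξ)) (hv : ∀ ξ, J' (v (J ξ)) = v ξ)
    (hw : ∀ ξ, w ξ = J (v (J ξ))) (ξ : α) :
    w (n ξ) = J (J' (n (J' (J (w ξ))))) := by
  have hJ'v : ∀ η, J' (v η) = v (J η) := fun η => by simpa only [hJ η] using hv (J η)
  rw [hw, hw, hJ, hv, ← hvn, hJ'v]

end Conjugation

theorem star_apply_eq_conj_of_apply_eq_conj {H : Type*} [NormedAddCommGroup H]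
    [InnerProductSpace ℂ H] [CompleteSpace H] {J : H → H} (hJ : Involutive J)
    (hJinner : ∀ x y : H, (inner ℂ (J x) (J y) : ℂ) = inner ℂ y x) {a b : H →L[ℂ] H}
    (hb : ∀ ξ, b ξ = J (a (J ξ))) (ξ : H) : star b ξ = J (star a (J ξ)) := by
  refine ext_inner_right ℂ fun η => ?_
  rw [ContinuousLinearMap.star_eq_adjoint, ContinuousLinearMap.adjoint_inner_left]
  calc (inner ℂ ξ (b η) : ℂ) = inner ℂ (J (J ξ)) (J (a (J η))) := by rw [hb, hJ ξ]
    _ = inner ℂ (J η) (star a (J ξ)) := by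
      rw [hJinner, ContinuousLinearMap.star_eq_adjoint,
        ContinuousLinearMap.adjoint_inner_right]
    _ = inner ℂ (J (star a (J ξ))) η := by rw [← hJinner, hJ]

theorem longo_intertwiner_general
    {H : Type*} [NormedAddCommGroup H] [InnerProductSpace ℂ H] [CompleteSpace H]
    (N : VonNeumannAlgebra H)
    (JN JM : H → H)
    (hJNinvol : Function.Involutive JN)
    (hJNanti : ∀ x y : H, (inner ℂ (JN x) (JN y) : ℂ) = inner ℂ y x)
    (hTomitaN : ∀ x y : H →L[ℂ] H, (∀ n ∈ N, x * n = n * x) →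
      (∀ ξ : H, y ξ = JN (x (JN ξ))) → y ∈ N)
    (γ : (H →L[ℂ] H) → (H →L[ℂ] H))
    (hγ : ∀ (x : H →L[ℂ] H) (ξ : H), γ x ξ = JN (JM (x (JM (JN ξ)))))
    (w' : H →L[ℂ] H)
    (hw'comm : ∀ n ∈ N, w' * n = n * w')
    (hw'iso : star w' * w' = 1)
    (hJrel : ∀ ξ : H, JM (w' (JN ξ)) = w' ξ)
    (w : H →L[ℂ] H) (hwdef : ∀ ξ : H, w ξ = JN (w' (JN ξ))) :
    w ∈ N ∧ star w * w = 1 ∧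
    (∀ ξ : H, (w * star w) ξ = JN ((w' * star w') (JN ξ))) ∧
    (∀ n ∈ N, w * n = γ n * w) := by
  have hstar := star_apply_eq_conj_of_apply_eq_conj hJNinvol hJNanti hwdef
  refine ⟨hTomitaN w' w hw'comm hwdef, ?_, conj_comp_conj (b := w) hJNinvol hwdef hstar,
    fun n hn => ?_⟩
  · ext ξ
    have hw'iso_apply : star w' (w' (JN ξ)) = JN ξ := congrArg (· (JN ξ)) hw'iso
    rw [mul_apply_eq_comp, one_apply_eq_self, conj_comp_conj hJNinvol hstar hwdef,
      hw'iso_apply, hJNinvol]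
  · ext ξ
    rw [mul_apply_eq_comp, mul_apply_eq_comp, hγ]
    exact conj_intertwines_of_commute hJNinvol
      (fun η => congrArg (· η) (hw'comm n hn)) hJrel hwdef ξ

/-- Let `M` be a von Neumann algebra on a Hilbert space `H` with a
cyclic separating vector `Ω`, `N ⊆ M` a von Neumann subalgebra with `Ω` also
cyclic and separating for `N`, and `JN`, `JM` the modular conjugations of
`(N, Ω)` and `(M, Ω)` (given here as antiunitary involutions, with the Tomita
property that `Ad JN` maps the commutant `N'` onto `N`).  Let
`γ = Ad (JN JM)` be Longo's canonical endomorphism.  If `w'` is an isometry in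
the commutant `N'` satisfying `JM w' JN = w'`, then `w = JN w' JN` lies in `N`,
is an isometry (`w* w = 1`), satisfies `w w* = JN w' w'* JN`, and intertwines:
`w n = γ(n) w` for all `n ∈ N`. -/
theorem longo_intertwiner
    {H : Type*} [NormedAddCommGroup H] [InnerProductSpace ℂ H] [CompleteSpace H]
    (M N : VonNeumannAlgebra H) (hNM : ∀ x, x ∈ N → x ∈ M)
    (Ω : H)
    (hcycM : Dense {ξ : H | ∃ x ∈ M, x Ω = ξ})
    (hsepM : ∀ x ∈ M, x Ω = 0 → x = 0)
    (hcycN : Dense {ξ : H | ∃ n ∈ N, n Ω = ξ})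
    (hsepN : ∀ n ∈ N, n Ω = 0 → n = 0)
    (JN JM : H → H)
    (hJNconj : ∀ (c : ℂ) (x y : H), JN (c • x + y) = (starRingEnd ℂ c) • JN x + JN y)
    (hJMconj : ∀ (c : ℂ) (x y : H), JM (c • x + y) = (starRingEnd ℂ c) • JM x + JM y)
    (hJNinvol : Function.Involutive JN) (hJMinvol : Function.Involutive JM)
    (hJNanti : ∀ x y : H, (inner ℂ (JN x) (JN y) : ℂ) = inner ℂ y x)
    (hJManti : ∀ x y : H, (inner ℂ (JM x) (JM y) : ℂ) = inner ℂ y x)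
    (hTomitaN : ∀ x y : H →L[ℂ] H, (∀ n ∈ N, x * n = n * x) →
      (∀ ξ : H, y ξ = JN (x (JN ξ))) → y ∈ N)
    (γ : (H →L[ℂ] H) → (H →L[ℂ] H))
    (hγ : ∀ (x : H →L[ℂ] H) (ξ : H), γ x ξ = JN (JM (x (JM (JN ξ)))))
    (w' : H →L[ℂ] H)
    (hw'comm : ∀ n ∈ N, w' * n = n * w')
    (hw'iso : star w' * w' = 1)
    (hJrel : ∀ ξ : H, JM (w' (JN ξ)) = w' ξ)
    (w : H →L[ℂ] H) (hwdef : ∀ ξ : H, w ξ = JN (w' (JN ξ))) :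
    w ∈ N ∧ star w * w = 1 ∧
    (∀ ξ : H, (w * star w) ξ = JN ((w' * star w') (JN ξ))) ∧
    (∀ n ∈ N, w * n = γ n * w) :=
  longo_intertwiner_general N JN JM hJNinvol hJNanti hTomitaN γ hγ w' hw'comm hw'iso hJrel w hwdef
end

section
/- Let N ⊆ M be an irreducible inclusion of von Neumann factors (N' ∩ M = ℂ1) with canonical endomorphism γ and an isometry w ∈ N satisfying w* w = 1 and w n = γ(n) w for all n ∈ N. Then the map E : M → N given by E(m) = w* γ(m) w is a conditional expectation from M onto N (i.e., E is a unital positive linear map with E(n₁ m n₂) = n₁ E(m) n₂ for all n₁, n₂ ∈ N and m ∈ M, and E restricts to the identity on N). -/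
/-!
Taking adjoints of the intertwining relation `w n = γ(n) w` gives `n w* = w* γ(n)`, so elements
of `N` can be moved through the compression `m ↦ w* γ(m) w` on either side; together with
`w* w = 1` this yields `w* γ(n) w = n` and the bimodule property. Positivity holds because
`w* γ(m* m) w = (γ(m) w)* (γ(m) w)`.
-/

section Compression

variable {B F : Type*} [FunLike F B B] (γ : F) {w : B}

theorem mul_star_eq_star_mul_map_of_mul_star_eq [Mul B] [StarMul B] [StarHomClass F B B] {n : B}
    (h : w * star n = γ (star n) * w) :
    n * star w = star w * γ n := by
  simpa [map_star] using congrArg star h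

theorem star_mul_map_mul_eq_of_mul_eq [Monoid B] [Star B] {n : B} (hw : star w * w = 1)
    (h : w * n = γ n * w) :
    star w * γ n * w = n := by
  rw [mul_assoc, ← h, ← mul_assoc, hw, one_mul]

theorem star_mul_map_mul_mul_mul [Semigroup B] [Star B] [MulHomClass F B B] {n₁ n₂ : B}
    (h₁ : n₁ * star w = star w * γ n₁) (h₂ : w * n₂ = γ n₂ * w) (m : B) :
    star w * γ (n₁ * m * n₂) * w = n₁ * (star w * γ m * w) * n₂ := by
  calc star w * γ (n₁ * m * n₂) * w = (star w * γ n₁) * γ m * (γ n₂ * w) := by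
        simp only [map_mul, mul_assoc]
    _ = n₁ * (star w * γ m * w) * n₂ := by rw [← h₁, ← h₂]; simp only [mul_assoc]

theorem star_mul_map_star_mul_self_mul [Semigroup B] [StarMul B] [MulHomClass F B B]
    [StarHomClass F B B] (m : B) :
    star w * γ (star m * m) * w = star (γ m * w) * (γ m * w) := by
  simp only [map_mul, map_star, star_mul, mul_assoc]

end Compression

theorem conditional_expectation_from_intertwiner_general
    {B : Type*} [Ring B] [StarRing B] [Algebra ℂ B] [StarModule ℂ B]
    (M N : StarSubalgebra ℂ B)
    (γ : B →⋆ₐ[ℂ] B)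
    (hγM : ∀ m ∈ M, γ m ∈ N)
    (w : B) (hwN : w ∈ N) (hwiso : star w * w = 1)
    (hwint : ∀ n ∈ N, w * n = γ n * w) :
    (star w * γ 1 * w = 1) ∧
    (∀ m ∈ M, star w * γ m * w ∈ N) ∧
    (∀ m : B, ∃ b : B, star w * γ (star m * m) * w = star b * b) ∧
    (∀ n₁ ∈ N, ∀ n₂ ∈ N, ∀ m : B,
        star w * γ (n₁ * m * n₂) * w = n₁ * (star w * γ m * w) * n₂) ∧
    (∀ n ∈ N, star w * γ n * w = n) := by
  have hid : ∀ n ∈ N, star w * γ n * w = n := fun n hn =>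
    star_mul_map_mul_eq_of_mul_eq γ hwiso (hwint n hn)
  refine ⟨hid 1 (one_mem N), ?_, ?_, ?_, hid⟩
  · exact fun m hm => mul_mem (mul_mem (star_mem hwN) (hγM m hm)) hwN
  · exact fun m => ⟨γ m * w, star_mul_map_star_mul_self_mul γ m⟩
  · intro n₁ hn₁ n₂ hn₂
    exact star_mul_map_mul_mul_mul γ
      (mul_star_eq_star_mul_map_of_mul_star_eq γ (hwint _ (star_mem hn₁))) (hwint n₂ hn₂)

/-- For an irreducible inclusion of factors `N ⊆ M` with canonical
endomorphism `γ` and an intertwining isometry `w ∈ N`, the map `E(m) = w* γ(m) w`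
is a conditional expectation from `M` onto `N`: it is unital, maps `M` into `N`,
is positive, has the `N`-bimodule property, and restricts to the identity on `N`.
(Linearity of `E` is automatic from the formula.) -/
theorem conditional_expectation_from_intertwiner
    {B : Type*} [Ring B] [StarRing B] [Algebra ℂ B] [StarModule ℂ B]
    (M N : StarSubalgebra ℂ B) (hNM : N ≤ M)
    (hirr : ∀ x ∈ M, (∀ n ∈ N, n * x = x * n) → ∃ c : ℂ, x = c • (1 : B))
    (γ : B →⋆ₐ[ℂ] B) (hγinj : Function.Injective γ)
    (hγM : ∀ m ∈ M, γ m ∈ N)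
    (w : B) (hwN : w ∈ N) (hwiso : star w * w = 1)
    (hwint : ∀ n ∈ N, w * n = γ n * w) :
    (star w * γ 1 * w = 1) ∧
    (∀ m ∈ M, star w * γ m * w ∈ N) ∧
    (∀ m : B, ∃ b : B, star w * γ (star m * m) * w = star b * b) ∧
    (∀ n₁ ∈ N, ∀ n₂ ∈ N, ∀ m : B,
        star w * γ (n₁ * m * n₂) * w = n₁ * (star w * γ m * w) * n₂) ∧
    (∀ n ∈ N, star w * γ n * w = n) :=
  conditional_expectation_from_intertwiner_general M N γ hγM w hwN hwiso hwint
end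

section
/- Define the convolution product on A₋₁,₀ = M ∩ γ(M)' by a * b := w₋₁* a γ(b) w₋₁. Then for all a, b ∈ A₋₁,₀, the element a * b again lies in A₋₁,₀ = M ∩ γ(M)'. -/
/-!
Since `w₋₁ γ(m) = γ²(m) w₋₁` and, taking adjoints, `γ(m) w₋₁* = w₋₁* γ²(m)`, the element
`γ(m)` can be moved through `w₋₁* c w₋₁` (with `c = a γ(b)`) by passing it through `c` as
`γ²(m)`. This is possible because `a` commutes with `γ(γ(m))` (as `γ(m) ∈ M`) and `γ(b)` commutes
with `γ(γ(m))` (apply `γ` to `b γ(m) = γ(m) b`).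
-/

theorem Commute.mul_mul_of_semiconjBy {G : Type*} [Monoid G] {v c w x y : G}
    (hv : SemiconjBy v y x) (hc : Commute c y) (hw : SemiconjBy w x y) :
    Commute (v * c * w) x :=
  (hv.mul_left hc).mul_left hw

theorem SemiconjBy.star_of_map_star {R A : Type*} [CommSemiring R] [StarRing R] [Semiring A]
    [StarRing A] [Algebra R A] [StarModule R A] (γ : A →⋆ₐ[R] A) {w n : A}
    (h : SemiconjBy w (star n) (γ (star n))) : SemiconjBy (star w) (γ n) n := by
  simpa only [map_star, star_star] using h.star_star_star

theorem convolution_closed_general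
    {B : Type*} [Ring B] [StarRing B] [Algebra ℂ B] [StarModule ℂ B]
    (M N : StarSubalgebra ℂ B) (hNM : N ≤ M)
    (γ : B →⋆ₐ[ℂ] B) (hγM : ∀ m ∈ M, γ m ∈ N)
    (wm1 : B) (hwN : wm1 ∈ N)
    (hintN : ∀ n ∈ N, wm1 * n = γ n * wm1) :
    ∀ a ∈ M, (∀ m ∈ M, a * γ m = γ m * a) →
      ∀ b ∈ M, (∀ m ∈ M, b * γ m = γ m * b) →
        (star wm1 * a * γ b * wm1 ∈ M ∧
          ∀ m ∈ M, (star wm1 * a * γ b * wm1) * γ m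
            = γ m * (star wm1 * a * γ b * wm1)) := by
  intro a ha hacomm b hb hbcomm
  have hwM : wm1 ∈ M := hNM hwN
  refine ⟨mul_mem (mul_mem (mul_mem (star_mem hwM) ha) (hNM (hγM b hb))) hwM, fun m hm => ?_⟩
  have hγmN : γ m ∈ N := hγM m hm
  have hw : SemiconjBy wm1 (γ m) (γ (γ m)) := hintN (γ m) hγmN
  have hwstar : SemiconjBy (star wm1) (γ (γ m)) (γ m) :=
    SemiconjBy.star_of_map_star γ (hintN _ (star_mem hγmN))
  have hbγ : Commute b (γ m) := hbcomm m hm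
  have hc : Commute (a * γ b) (γ (γ m)) := Commute.mul_left (hacomm (γ m) (hNM hγmN)) (hbγ.map γ)
  rw [mul_assoc (star wm1) a]
  exact Commute.mul_mul_of_semiconjBy hwstar hc hw

/-- The convolution product `a * b := w₋₁* a γ(b) w₋₁` maps the
relative commutant `A₋₁,₀ = M ∩ γ(M)'` into itself: for `a, b ∈ A₋₁,₀`, the
element `a * b` again lies in `M` and commutes with `γ(M)`. (`wm1 = w₋₁`.) -/
theorem convolution_closed
    {B : Type*} [Ring B] [StarRing B] [Algebra ℂ B] [StarModule ℂ B]
    (M N : StarSubalgebra ℂ B) (hNM : N ≤ M)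
    (γ : B →⋆ₐ[ℂ] B) (hγM : ∀ m ∈ M, γ m ∈ N)
    (wm1 : B) (hwN : wm1 ∈ N) (hiso : star wm1 * wm1 = 1)
    (hintN : ∀ n ∈ N, wm1 * n = γ n * wm1) :
    ∀ a ∈ M, (∀ m ∈ M, a * γ m = γ m * a) →
      ∀ b ∈ M, (∀ m ∈ M, b * γ m = γ m * b) →
        (star wm1 * a * γ b * wm1 ∈ M ∧
          ∀ m ∈ M, (star wm1 * a * γ b * wm1) * γ m
            = γ m * (star wm1 * a * γ b * wm1)) :=
  convolution_closed_general M N hNM γ hγM wm1 hwN hintN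
end

section
/- Define the Fourier transform F : A₋₁,₀ → N by F(a) = γ(w₋₁* a w₁) = w₋₃* γ(a) w₋₁, where w₋₃ = γ(w₋₁). Then for every a ∈ A₋₁,₀, F(a) lies in the relative commutant A₋₂,₋₁ = N ∩ γ(N)'. -/
/-!
For `n ∈ N`, each factor of `F(a) = w₋₃* γ(a) w₋₁` intertwines: `w₋₁` carries `γ(n)` to `γ²(n)`
(defining relation of `w₋₁`, as `γ(n) ∈ N`), `γ(a)` commutes with `γ²(n)` (as `a ∈ γ(M)'`), and
`w₋₃*` carries `γ²(n)` back to `γ(n)` (apply `γ` and `*` to the relation of `w₋₁` at `n*`).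
Composing, `F(a)` commutes with `γ(n)`.
-/

theorem SemiconjBy.star_map {R F : Type*} [Mul R] [StarMul R] [FunLike F R R]
    [MulHomClass F R R] [StarHomClass F R R] (γ : F) {w x : R}
    (h : SemiconjBy w (star x) (γ (star x))) : SemiconjBy (star (γ w)) (γ (γ x)) (γ x) := by
  simpa only [map_star, star_star] using (h.map γ).star_star_star

theorem fourier_transform_range_general
    {B : Type*} [Ring B] [StarRing B] [Algebra ℂ B] [StarModule ℂ B]
    (M N : StarSubalgebra ℂ B) (hNM : N ≤ M)
    (γ : B →⋆ₐ[ℂ] B) (hγM : ∀ m ∈ M, γ m ∈ N)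
    (wm1 w1 : B) (hwN : wm1 ∈ N)
    (hintN : ∀ n ∈ N, wm1 * n = γ n * wm1)
    (hγw1 : γ w1 = wm1) :
    ∀ a ∈ M, (∀ m ∈ M, a * γ m = γ m * a) →
      (γ (star wm1 * a * w1) = star (γ wm1) * γ a * wm1 ∧
       γ (star wm1 * a * w1) ∈ N ∧
       ∀ n ∈ N, γ (star wm1 * a * w1) * γ n = γ n * γ (star wm1 * a * w1)) := by
  intro a ha hcomm
  have hF : γ (star wm1 * a * w1) = star (γ wm1) * γ a * wm1 := by
    rw [map_mul, map_mul, map_star, hγw1]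
  refine ⟨hF, hF ▸ mul_mem (mul_mem (star_mem (hγM wm1 (hNM hwN))) (hγM a ha)) hwN, ?_⟩
  intro n hn
  have hleft : SemiconjBy (star (γ wm1)) (γ (γ n)) (γ n) :=
    SemiconjBy.star_map γ (hintN (star n) (star_mem hn))
  have hmid : Commute (γ a) (γ (γ n)) := Commute.map (hcomm n (hNM hn)) γ
  have hright : SemiconjBy wm1 (γ n) (γ (γ n)) := hintN (γ n) (hγM n (hNM hn))
  rw [hF]
  exact (hleft.mul_left hmid).mul_left hright

/-- The Fourier transform `F(a) = γ(w₋₁* a w₁) = w₋₃* γ(a) w₋₁`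
(with `w₋₃ = γ(w₋₁)`) maps `A₋₁,₀ = M ∩ γ(M)'` into the relative commutant
`A₋₂,₋₁ = N ∩ γ(N)'`. (`wm1 = w₋₁`, `w1 = w₁`.) -/
theorem fourier_transform_range
    {B : Type*} [Ring B] [StarRing B] [Algebra ℂ B] [StarModule ℂ B]
    (M N : StarSubalgebra ℂ B) (hNM : N ≤ M)
    (γ : B →⋆ₐ[ℂ] B) (hγM : ∀ m ∈ M, γ m ∈ N)
    (wm1 w1 : B) (hwN : wm1 ∈ N) (hiso : star wm1 * wm1 = 1)
    (hintN : ∀ n ∈ N, wm1 * n = γ n * wm1)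
    (hγw1 : γ w1 = wm1) (hiso1 : star w1 * w1 = 1)
    (hintM : ∀ m ∈ M, w1 * m = γ m * w1) :
    ∀ a ∈ M, (∀ m ∈ M, a * γ m = γ m * a) →
      (γ (star wm1 * a * w1) = star (γ wm1) * γ a * wm1 ∧
       γ (star wm1 * a * w1) ∈ N ∧
       ∀ n ∈ N, γ (star wm1 * a * w1) * γ n = γ n * γ (star wm1 * a * w1)) :=
  fourier_transform_range_general M N hNM γ hγM wm1 w1 hwN hintN hγw1
end

section
/- The Fourier transform is multiplicative from the convolution product to the ordinary product: F(a * b) = F(a) · F(b) for all a, b ∈ A₋₁,₀, where a * b = w₋₁* a γ(b) w₋₁ and F(a) = γ(w₋₁* a w₁). -/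
/-- In the application `w = w₋₁`, `c = γ b` and `v = γ w₋₁`. -/
theorem star_mul_convolution_mul_eq_mul {B : Type*} [Monoid B] [StarMul B] {w w₁ v a b c : B}
    (hww : w * w₁ = w₁ * w₁) (hc : c * w₁ = w₁ * b) (hv : w * w = v * w)
    (ha : Commute a (star v)) (hv₁ : star v * w₁ = w₁ * star w) :
    star w * (star w * a * c * w) * w₁ = (star w * a * w₁) * (star w * b * w₁) := by
  have hstar : star w * star w = star w * star v := by
    simpa only [star_mul] using congrArg star hv
  calc star w * (star w * a * c * w) * w₁
      = star w * star w * a * (c * w₁) * w₁ := by simp only [mul_assoc, hww]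
    _ = star w * a * (star v * w₁) * b * w₁ := by
        rw [hstar, hc, mul_assoc (star w) (star v), ha.symm.eq]; simp only [mul_assoc]
    _ = (star w * a * w₁) * (star w * b * w₁) := by rw [hv₁]; simp only [mul_assoc]

theorem fourier_transform_multiplicative_general
    {B : Type*} [Ring B] [StarRing B] [Algebra ℂ B] [StarModule ℂ B]
    (M N : StarSubalgebra ℂ B) (hNM : N ≤ M)
    (γ : B →⋆ₐ[ℂ] B)
    (wm1 w1 : B) (hwN : wm1 ∈ N)
    (hintN : ∀ n ∈ N, wm1 * n = γ n * wm1)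
    (hintM : ∀ m ∈ M, w1 * m = γ m * w1)
    (hww : wm1 * w1 = w1 * w1) :
    ∀ a ∈ M, (∀ m ∈ M, a * γ m = γ m * a) →
      ∀ b ∈ M, (∀ m ∈ M, b * γ m = γ m * b) →
        γ (star wm1 * (star wm1 * a * γ b * wm1) * w1)
          = γ (star wm1 * a * w1) * γ (star wm1 * b * w1) := by
  intro a _ haγ b hbM _
  have hstarM : star wm1 ∈ M := star_mem (hNM hwN)
  have ha : Commute a (star (γ wm1)) := by rw [← map_star]; exact haγ _ hstarM
  have hv₁ : star (γ wm1) * w1 = w1 * star wm1 := by rw [← map_star]; exact (hintM _ hstarM).symm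
  rw [star_mul_convolution_mul_eq_mul hww (hintM b hbM).symm (hintN wm1 hwN) ha hv₁, map_mul]

/-- The Fourier transform is multiplicative from the convolution
product to the operator product: `F(a * b) = F(a) · F(b)` for `a, b ∈ A₋₁,₀`,
where `a * b = w₋₁* a γ(b) w₋₁` and `F(a) = γ(w₋₁* a w₁)`.
(`wm1 = w₋₁`, `w1 = w₁`.) -/
theorem fourier_transform_multiplicative
    {B : Type*} [Ring B] [StarRing B] [Algebra ℂ B] [StarModule ℂ B]
    (M N : StarSubalgebra ℂ B) (hNM : N ≤ M)
    (γ : B →⋆ₐ[ℂ] B) (hγM : ∀ m ∈ M, γ m ∈ N)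
    (wm1 w1 : B) (hwN : wm1 ∈ N) (hiso : star wm1 * wm1 = 1)
    (hintN : ∀ n ∈ N, wm1 * n = γ n * wm1)
    (hγw1 : γ w1 = wm1) (hiso1 : star w1 * w1 = 1)
    (hintM : ∀ m ∈ M, w1 * m = γ m * w1)
    (hww : wm1 * w1 = w1 * w1) :
    ∀ a ∈ M, (∀ m ∈ M, a * γ m = γ m * a) →
      ∀ b ∈ M, (∀ m ∈ M, b * γ m = γ m * b) →
        γ (star wm1 * (star wm1 * a * γ b * wm1) * w1)
          = γ (star wm1 * a * w1) * γ (star wm1 * b * w1) :=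
  fourier_transform_multiplicative_general M N hNM γ wm1 w1 hwN hintN hintM hww
end

section
/- The state μ₀ on A₋₁,₀ is multiplicative with respect to convolution: μ₀(a * b) = μ₀(a) μ₀(b) for all a, b ∈ A₋₁,₀, where μ₀(a)·1 = w₋₁* a w₋₁ and a * b = w₋₁* a γ(b) w₋₁. -/
/-!
Taking adjoints in `w w = γ(w) w` gives `w* w* = w* γ(w*)`. Since `a` commutes with
`γ(M) ∋ γ(w*)`, this turns `w* (w* a γ(b) w) w` into `w* a γ(w* b w) w = μ₀(b) · w* a w`.
-/

section Intertwiner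

variable {B F : Type*} [Semigroup B] [StarMul B] [FunLike F B B] [StarHomClass F B B]

theorem star_mul_star_eq_star_mul_map_star {γ : F} {w : B} (hww : w * w = γ w * w) :
    star w * star w = star w * γ (star w) := by
  simpa only [star_mul, map_star] using congrArg star hww

theorem star_mul_star_mul_map_mul_eq_map_star_mul [MulHomClass F B B] {γ : F} {w a b : B}
    (hww : w * w = γ w * w) (ha : a * γ (star w) = γ (star w) * a) :
    star w * (star w * a * γ b * w) * w = star w * a * γ (star w * b * w) * w :=
  calc star w * (star w * a * γ b * w) * w
      = (star w * star w) * a * γ b * (w * w) := by simp only [mul_assoc]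
    _ = star w * (γ (star w) * a) * γ b * γ w * w := by
        rw [star_mul_star_eq_star_mul_map_star hww, hww]; simp only [mul_assoc]
    _ = star w * a * γ (star w * b * w) * w := by
        rw [← ha]; simp only [map_mul, mul_assoc]

end Intertwiner

theorem mu_zero_multiplicative_on_convolution_general
    {B : Type*} [Ring B] [StarRing B] [Algebra ℂ B] [StarModule ℂ B]
    (M N : StarSubalgebra ℂ B) (hNM : N ≤ M)
    (γ : B →⋆ₐ[ℂ] B)
    (wm1 : B) (hwN : wm1 ∈ N)
    (hww : wm1 * wm1 = γ wm1 * wm1) :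
    ∀ a ∈ M, (∀ m ∈ M, a * γ m = γ m * a) →
      ∀ b ∈ M, (∀ m ∈ M, b * γ m = γ m * b) →
        ∀ ca cb : ℂ, star wm1 * a * wm1 = ca • (1 : B) →
          star wm1 * b * wm1 = cb • (1 : B) →
            star wm1 * (star wm1 * a * γ b * wm1) * wm1 = (ca * cb) • (1 : B) := by
  intro a _ hacomm b _ _ ca cb hca hcb
  have ha : a * γ (star wm1) = γ (star wm1) * a := hacomm _ (hNM (star_mem hwN))
  calc star wm1 * (star wm1 * a * γ b * wm1) * wm1
      = star wm1 * a * γ (star wm1 * b * wm1) * wm1 :=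
        star_mul_star_mul_map_mul_eq_map_star_mul hww ha
    _ = cb • (star wm1 * a * wm1) := by
        rw [hcb, map_smul, map_one, mul_smul_one, smul_mul_assoc]
    _ = (ca * cb) • (1 : B) := by rw [hca, smul_smul, mul_comm]

/-- The state `μ₀` on `A₋₁,₀` is multiplicative with respect to
convolution: `μ₀(a * b) = μ₀(a) μ₀(b)`, where `μ₀(a)·1 = w₋₁* a w₋₁` and
`a * b = w₋₁* a γ(b) w₋₁`.  (`wm1 = w₋₁`, `wm3 = w₋₃ = γ(w₋₁)`, with the
intertwining relation `w₋₁ w₋₁ = w₋₃ w₋₁`.) -/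
theorem mu_zero_multiplicative_on_convolution
    {B : Type*} [Ring B] [StarRing B] [Algebra ℂ B] [StarModule ℂ B]
    (M N : StarSubalgebra ℂ B) (hNM : N ≤ M)
    (γ : B →⋆ₐ[ℂ] B) (hγM : ∀ m ∈ M, γ m ∈ N)
    (wm1 : B) (hwN : wm1 ∈ N) (hiso : star wm1 * wm1 = 1)
    (hintN : ∀ n ∈ N, wm1 * n = γ n * wm1)
    (hww : wm1 * wm1 = γ wm1 * wm1) :
    ∀ a ∈ M, (∀ m ∈ M, a * γ m = γ m * a) →
      ∀ b ∈ M, (∀ m ∈ M, b * γ m = γ m * b) →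
        ∀ ca cb : ℂ, star wm1 * a * wm1 = ca • (1 : B) →
          star wm1 * b * wm1 = cb • (1 : B) →
            star wm1 * (star wm1 * a * γ b * wm1) * wm1 = (ca * cb) • (1 : B) :=
  mu_zero_multiplicative_on_convolution_general M N hNM γ wm1 hwN hww
end

section
/- Pimsner-Popa expectation formula: Assume depth 2, so that the family (λᵢ) ⊆ A₋₁,₀ with μ₀(λᵢ* λⱼ) = δᵢⱼ is a Pimsner–Popa basis for E₀ : M → N, i.e., Σᵢ λᵢ e₁ λᵢ* = 1. Define E₁(a) = w₀* γ(a) w₀ for a ∈ M₁, where w₀ = Σᵢ γ(λᵢ) w₋₁ λᵢ*. Then E₁(m e₁ m*) = m m* for every m that is a finite linear combination m = Σₗ λₗ nₗ with nₗ ∈ N. -/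
/-!
Write `E(a) = w₀* γ(a) w₀`. Since `w₀` intertwines `id` and `γ` on `M`, so does `w₀*`
after taking adjoints, and hence `E(m x m*) = m E(x) m*` for `m ∈ M`. With
`γ(e₁) = γ(w₁) γ(w₁)* = w₋₁ w₋₁*` and `w₋₁* w₀ = 1` one gets `E(e₁) = 1`.
-/

section Intertwiner

variable {B F : Type*} [Monoid B] [StarMul B] [FunLike F B B] [StarHomClass F B B]

theorem star_mul_map_eq_mul_star {γ : F} {w m : B} (h : w * star m = γ (star m) * w) :
    star w * γ m = m * star w := by
  simpa only [star_mul, star_star, map_star] using congrArg star h.symm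

theorem star_mul_map_conj_mul [MulHomClass F B B] {γ : F} {w m : B}
    (h : w * star m = γ (star m) * w) (x : B) :
    star w * γ (m * x * star m) * w = m * (star w * γ x * w) * star m := by
  simp only [map_mul, mul_assoc, ← h]
  simp only [← mul_assoc, star_mul_map_eq_mul_star h]

theorem star_mul_map_mul_star_mul_eq_one [MulHomClass F B B] {γ : F} {w v : B}
    (h : star (γ v) * w = 1) :
    star w * γ (v * star v) * w = 1 := by
  have h' : star w * γ v = 1 := by simpa only [star_mul, star_star, star_one] using congrArg star h
  rw [map_mul, map_star, ← mul_assoc, h', one_mul, h]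

end Intertwiner

theorem pimsner_popa_expectation_formula_general
    {B : Type*} [Ring B] [StarRing B] [Algebra ℂ B] [StarModule ℂ B]
    (M N : StarSubalgebra ℂ B) (hNM : N ≤ M)
    (γ : B →⋆ₐ[ℂ] B)
    (wm1 w1 : B)
    (hγw1 : γ w1 = wm1)
    {ι : Type*} [Fintype ι] (lam : ι → B)
    (hlamA : ∀ i, lam i ∈ M ∧ ∀ m ∈ M, lam i * γ m = γ m * lam i)
    (e1 : B) (he1 : e1 = w1 * star w1)
    (w0 : B)
    (hw0int : ∀ m ∈ M, w0 * m = γ m * w0)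
    (hw0norm1 : star wm1 * w0 = 1)
    (n : ι → B) (hn : ∀ i, n i ∈ N) :
    star w0 * γ ((∑ i, lam i * n i) * e1 * star (∑ i, lam i * n i)) * w0
      = (∑ i, lam i * n i) * star (∑ i, lam i * n i) := by
  have hm : ∑ i, lam i * n i ∈ M := sum_mem fun i _ => mul_mem (hlamA i).1 (hNM (hn i))
  have hE : star w0 * γ e1 * w0 = 1 :=
    he1 ▸ star_mul_map_mul_star_mul_eq_one (hγw1 ▸ hw0norm1)
  rw [star_mul_map_conj_mul (hw0int _ (star_mem hm)), hE, mul_one]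

/-- Pimsner–Popa expectation formula: Assume depth 2, so that the
orthonormal family `(λᵢ) ⊆ A₋₁,₀` is a Pimsner–Popa basis for `E₀ : M → N`,
i.e. `Σᵢ λᵢ e₁ λᵢ* = 1`.  With `w₀ = Σᵢ γ(λᵢ) w₋₁ λᵢ*` and
`E₁(a) = w₀* γ(a) w₀`, one has `E₁(m e₁ m*) = m m*` for every finite linear
combination `m = Σₗ λₗ nₗ` with `nₗ ∈ N`.
(`wm1 = w₋₁`, `w1 = w₁`, `lam i = λᵢ`.) -/
theorem pimsner_popa_expectation_formula
    {B : Type*} [Ring B] [StarRing B] [Algebra ℂ B] [StarModule ℂ B]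
    (M N : StarSubalgebra ℂ B) (hNM : N ≤ M)
    (γ : B →⋆ₐ[ℂ] B) (hγM : ∀ m ∈ M, γ m ∈ N)
    (wm1 w1 : B) (hwN : wm1 ∈ N) (hiso : star wm1 * wm1 = 1)
    (hintN : ∀ n ∈ N, wm1 * n = γ n * wm1)
    (hγw1 : γ w1 = wm1) (hiso1 : star w1 * w1 = 1)
    (hintM : ∀ m ∈ M, w1 * m = γ m * w1)
    {ι : Type*} [Fintype ι] [DecidableEq ι] (lam : ι → B)
    (hlamA : ∀ i, lam i ∈ M ∧ ∀ m ∈ M, lam i * γ m = γ m * lam i)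
    (hON : ∀ i j, star wm1 * (star (lam i) * lam j) * wm1
      = (if i = j then (1 : ℂ) else 0) • (1 : B))
    (e1 : B) (he1 : e1 = w1 * star w1)
    (hPP : ∑ i, lam i * e1 * star (lam i) = 1)
    (w0 : B) (hw0 : w0 = ∑ i, γ (lam i) * wm1 * star (lam i))
    (hw0int : ∀ m ∈ M, w0 * m = γ m * w0)
    (hw0norm1 : star wm1 * w0 = 1) (hw0norm2 : star w1 * w0 = 1)
    (n : ι → B) (hn : ∀ i, n i ∈ N) :
    star w0 * γ ((∑ i, lam i * n i) * e1 * star (∑ i, lam i * n i)) * w0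
      = (∑ i, lam i * n i) * star (∑ i, lam i * n i) :=
  pimsner_popa_expectation_formula_general M N hNM γ wm1 w1 hγw1 lam hlamA e1 he1 w0 hw0int hw0norm1
    n hn
end

section
/- Plancherel formula: Assume depth 2. For the Fourier transform F(a) = γ(w₋₁* a w₁) and the weight μ₋₁ on A₋₂,₋₁ given by μ₋₁(x) = Σᵢ λᵢ γ⁻¹(x) λᵢ*, one has μ₋₁(F(a)* F(a)) = μ₀(a* a) for all a ∈ A₋₁,₀; more generally μ₋₁(F(a)* F(b)) = μ₀(a* b). -/
/-!
Write `e := w₁ w₁*`, so that `γ(e) = w₋₁ w₋₁*`. By injectivity of `γ`, the element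
`γ⁻¹(F(a)* F(b))` is `w₁* a* γ(e) b w₁`. Conjugating by `λᵢ ∈ M` moves `λᵢ` through `w₁*`
as `γ(λᵢ)` (intertwining), and `γ(λᵢ)` commutes with `a*` and `b`, which lie in `γ(M)'`.
Hence `λᵢ γ⁻¹(F(a)* F(b)) λᵢ* = w₁* a* γ(λᵢ e λᵢ*) b w₁`, and summing over the Pimsner–Popa
basis `Σᵢ λᵢ e λᵢ* = 1` leaves `w₁* a* b w₁ = μ₀(a* b)`.
-/

section Intertwiner

variable {R A : Type*} [CommSemiring R] [StarRing R] [Semiring A] [StarRing A] [Algebra R A]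
  [StarModule R A] {M : StarSubalgebra R A} {γ : A →⋆ₐ[R] A}

theorem mul_star_eq_star_mul_of_intertwines {w : A} (hint : ∀ m ∈ M, w * m = γ m * w)
    {m : A} (hm : m ∈ M) : m * star w = star w * γ m := by
  simpa [star_mul, map_star] using congrArg star (hint (star m) (star_mem hm))

theorem conj_star_mul_mul_of_intertwines {w : A} (hint : ∀ m ∈ M, w * m = γ m * w)
    {l : A} (hl : l ∈ M) (z : A) :
    l * (star w * z * w) * star l = star w * (γ l * z * γ (star l)) * w := by
  calc l * (star w * z * w) * star l = l * star w * z * (w * star l) := by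
        simp only [mul_assoc]
    _ = star w * γ l * z * (γ (star l) * w) := by
        rw [mul_star_eq_star_mul_of_intertwines hint hl, hint _ (star_mem hl)]
    _ = star w * (γ l * z * γ (star l)) * w := by
        simp only [mul_assoc]

theorem commute_star_of_forall_commute {a : A} (ha : ∀ m ∈ M, Commute a (γ m))
    {m : A} (hm : m ∈ M) : Commute (star a) (γ m) := by
  simpa [map_star] using (ha (star m) (star_mem hm)).star_star

theorem map_conj_mul_of_forall_commute {a b : A} (ha : ∀ m ∈ M, Commute a (γ m))
    (hb : ∀ m ∈ M, Commute b (γ m)) {l : A} (hl : l ∈ M) (e : A) :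
    γ l * (star a * γ e * b) * γ (star l) = star a * γ (l * e * star l) * b := by
  calc γ l * (star a * γ e * b) * γ (star l) = γ l * star a * γ e * (b * γ (star l)) := by
        simp only [mul_assoc]
    _ = star a * γ l * γ e * (γ (star l) * b) := by
        rw [(commute_star_of_forall_commute ha hl).eq, (hb _ (star_mem hl)).eq]
    _ = star a * γ (l * e * star l) * b := by
        simp only [map_mul, mul_assoc]

end Intertwiner

theorem plancherel_formula_general
    {B : Type*} [Ring B] [StarRing B] [Algebra ℂ B] [StarModule ℂ B]
    (M : StarSubalgebra ℂ B)
    (γ : B →⋆ₐ[ℂ] B) (hγinj : Function.Injective γ)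
    (wm1 w1 : B)
    (hγw1 : γ w1 = wm1)
    (hintM : ∀ m ∈ M, w1 * m = γ m * w1)
    {ι : Type*} [Fintype ι] (lam : ι → B)
    (hlamA : ∀ i, lam i ∈ M ∧ ∀ m ∈ M, lam i * γ m = γ m * lam i)
    (hPP1 : ∑ i, lam i * (w1 * star w1) * star (lam i) = 1) :
    ∀ a ∈ M, (∀ m ∈ M, a * γ m = γ m * a) →
      ∀ b ∈ M, (∀ m ∈ M, b * γ m = γ m * b) →
        ∀ y : B, γ y = star (γ (star wm1 * a * w1)) * γ (star wm1 * b * w1) →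
          ∀ c : ℂ, star w1 * (star a * b) * w1 = c • (1 : B) →
            ∑ i, lam i * y * star (lam i) = c • (1 : B) := by
  intro a _ haC b _ hbC y hy c hc
  have hy' : y = star w1 * (star a * γ (w1 * star w1) * b) * w1 := by
    apply hγinj
    simp only [hy, map_mul, map_star, hγw1, star_mul, star_star, mul_assoc]
  have hconj : ∀ i, lam i * y * star (lam i)
      = star w1 * (star a * γ (lam i * (w1 * star w1) * star (lam i)) * b) * w1 := by
    intro i
    have hl := (hlamA i).1
    rw [hy', conj_star_mul_mul_of_intertwines hintM hl,
      map_conj_mul_of_forall_commute haC hbC hl]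
  simp only [hconj, ← Finset.sum_mul, ← Finset.mul_sum, ← map_sum, hPP1, map_one, mul_one, hc]

/-- Plancherel formula: Assume depth 2.  For the Fourier
transform `F(a) = γ(w₋₁* a w₁)` and the weight `μ₋₁` on `A₋₂,₋₁` given by
`μ₋₁(x) = Σᵢ λᵢ γ⁻¹(x) λᵢ*`, one has `μ₋₁(F(a)* F(b)) = μ₀(a* b)` for all
`a, b ∈ A₋₁,₀` (in particular `μ₋₁(F(a)* F(a)) = μ₀(a* a)`).  Since `γ` is
injective, `γ⁻¹(F(a)* F(b))` is encoded as the unique `y` with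
`γ(y) = F(a)* F(b)`, and `μ₀(a* b)·1 = w₁* (a* b) w₁`.
(`wm1 = w₋₁`, `w1 = w₁`, `lam i = λᵢ`.) -/
theorem plancherel_formula
    {B : Type*} [Ring B] [StarRing B] [Algebra ℂ B] [StarModule ℂ B]
    (M N : StarSubalgebra ℂ B) (hNM : N ≤ M)
    (γ : B →⋆ₐ[ℂ] B) (hγinj : Function.Injective γ) (hγM : ∀ m ∈ M, γ m ∈ N)
    (wm1 w1 : B) (hwN : wm1 ∈ N) (hiso : star wm1 * wm1 = 1)
    (hintN : ∀ n ∈ N, wm1 * n = γ n * wm1)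
    (hγw1 : γ w1 = wm1) (hiso1 : star w1 * w1 = 1)
    (hintM : ∀ m ∈ M, w1 * m = γ m * w1)
    {ι : Type*} [Fintype ι] (lam : ι → B)
    (hlamA : ∀ i, lam i ∈ M ∧ ∀ m ∈ M, lam i * γ m = γ m * lam i)
    (hPP1 : ∑ i, lam i * (w1 * star w1) * star (lam i) = 1)
    (hPPm1 : ∑ i, lam i * (wm1 * star wm1) * star (lam i) = 1) :
    ∀ a ∈ M, (∀ m ∈ M, a * γ m = γ m * a) →
      ∀ b ∈ M, (∀ m ∈ M, b * γ m = γ m * b) →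
        ∀ y : B, γ y = star (γ (star wm1 * a * w1)) * γ (star wm1 * b * w1) →
          ∀ c : ℂ, star w1 * (star a * b) * w1 = c • (1 : B) →
            ∑ i, lam i * y * star (lam i) = c • (1 : B) :=
  plancherel_formula_general M γ hγinj wm1 w1 hγw1 hintM lam hlamA hPP1
end

section
/- Hopf-module property of the right action: defining m ◁ â := F₁⁻¹(Ŝ₁(â)) * m for â ∈ A₀,₁ and m ∈ M, one has (m ◁ â) ◁ b̂ = m ◁ (â b̂) for all â, b̂ ∈ A₀,₁ and m ∈ M. -/
/-!
The inverse Fourier transform turns products in `A₀,₁` into convolutions, and the antipode reverses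
products, so `F₁⁻¹(Ŝ₁(â b̂)) = F₁⁻¹(Ŝ₁ b̂) * F₁⁻¹(Ŝ₁ â)`; associativity of the convolution action on
`M` then gives the module law.
-/

section InverseOfMultiplicative

variable {α β : Type*} [Mul β] {A : Set α} {A01 : Set β} {conv : α → α → α} {F : α → β}
  {G : β → α}

theorem inverse_map_mul_eq_conv (hconvA : ∀ a ∈ A, ∀ b ∈ A, conv a b ∈ A)
    (hGmaps : ∀ x ∈ A01, G x ∈ A) (hleftinv : ∀ a ∈ A, G (F a) = a)
    (hrightinv : ∀ x ∈ A01, F (G x) = x)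
    (hFmul : ∀ a ∈ A, ∀ b ∈ A, F (conv a b) = F a * F b)
    {x y : β} (hx : x ∈ A01) (hy : y ∈ A01) :
    G (x * y) = conv (G x) (G y) := by
  have hGx := hGmaps x hx
  have hGy := hGmaps y hy
  calc G (x * y) = G (F (G x) * F (G y)) := by rw [hrightinv x hx, hrightinv y hy]
    _ = G (F (conv (G x) (G y))) := by rw [hFmul _ hGx _ hGy]
    _ = conv (G x) (G y) := hleftinv _ (hconvA _ hGx _ hGy)

end InverseOfMultiplicative

theorem right_action_hopf_module_property_general
    {B : Type*} [Ring B]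
    (Mset A A01 : Set B)
    (conv : B → B → B)
    (hconvA : ∀ a ∈ A, ∀ b ∈ A, conv a b ∈ A)
    (hassoc : ∀ a ∈ A, ∀ b ∈ A, ∀ m ∈ Mset,
      conv (conv a b) m = conv a (conv b m))
    (F₁ Finv S₁ : B → B)
    (hFinvmaps : ∀ x ∈ A01, Finv x ∈ A)
    (hleftinv : ∀ a ∈ A, Finv (F₁ a) = a)
    (hrightinv : ∀ x ∈ A01, F₁ (Finv x) = x)
    (hF₁mul : ∀ a ∈ A, ∀ b ∈ A, F₁ (conv a b) = F₁ a * F₁ b)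
    (hS₁maps : ∀ x ∈ A01, S₁ x ∈ A01)
    (hS₁anti : ∀ x ∈ A01, ∀ y ∈ A01, S₁ (x * y) = S₁ y * S₁ x) :
    ∀ m ∈ Mset, ∀ ahat ∈ A01, ∀ bhat ∈ A01,
      conv (Finv (S₁ bhat)) (conv (Finv (S₁ ahat)) m)
        = conv (Finv (S₁ (ahat * bhat))) m := by
  intro m hm ahat ha bhat hb
  have hSa := hS₁maps ahat ha
  have hSb := hS₁maps bhat hb
  rw [hS₁anti _ ha _ hb,
    inverse_map_mul_eq_conv hconvA hFinvmaps hleftinv hrightinv hF₁mul hSb hSa,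
    hassoc _ (hFinvmaps _ hSb) _ (hFinvmaps _ hSa) _ hm]

/-- Hopf-module property of the right action: defining
`m ◁ â := F₁⁻¹(Ŝ₁(â)) * m` for `â ∈ A₀,₁` and `m ∈ M`, one has
`(m ◁ â) ◁ b̂ = m ◁ (â b̂)`.  Here `conv a m = w₋₁* a γ(m) w₋₁` is the
convolution (mixed) product, `F₁` is the Fourier transform, a bijection from
`A₋₁,₀` onto `A₀,₁` with `F₁(a * b) = F₁(a) F₁(b)` and inverse `Finv`, and
`Ŝ₁` is the antipode on `A₀,₁`, an involutive anti-automorphism. -/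
theorem right_action_hopf_module_property
    {B : Type*} [Ring B] [StarRing B] [Algebra ℂ B] [StarModule ℂ B]
    (Mset A A01 : Set B) (hAM : A ⊆ Mset)
    (conv : B → B → B)
    (hconvA : ∀ a ∈ A, ∀ b ∈ A, conv a b ∈ A)
    (hconvM : ∀ a ∈ A, ∀ m ∈ Mset, conv a m ∈ Mset)
    (hassoc : ∀ a ∈ A, ∀ b ∈ A, ∀ m ∈ Mset,
      conv (conv a b) m = conv a (conv b m))
    (F₁ Finv S₁ : B → B)
    (hF₁maps : ∀ a ∈ A, F₁ a ∈ A01)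
    (hFinvmaps : ∀ x ∈ A01, Finv x ∈ A)
    (hleftinv : ∀ a ∈ A, Finv (F₁ a) = a)
    (hrightinv : ∀ x ∈ A01, F₁ (Finv x) = x)
    (hF₁mul : ∀ a ∈ A, ∀ b ∈ A, F₁ (conv a b) = F₁ a * F₁ b)
    (hA01mul : ∀ x ∈ A01, ∀ y ∈ A01, x * y ∈ A01)
    (hS₁maps : ∀ x ∈ A01, S₁ x ∈ A01)
    (hS₁anti : ∀ x ∈ A01, ∀ y ∈ A01, S₁ (x * y) = S₁ y * S₁ x)
    (hS₁invol : ∀ x ∈ A01, S₁ (S₁ x) = x) :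
    ∀ m ∈ Mset, ∀ ahat ∈ A01, ∀ bhat ∈ A01,
      conv (Finv (S₁ bhat)) (conv (Finv (S₁ ahat)) m)
        = conv (Finv (S₁ (ahat * bhat))) m :=
  right_action_hopf_module_property_general Mset A A01 conv hconvA hassoc F₁ Finv S₁ hFinvmaps
    hleftinv hrightinv hF₁mul hS₁maps hS₁anti
end

section
/- Characterization of the subalgebra N via convolution: for n ∈ M, the following are equivalent: (a) n ∈ N; (b) a * n = μ₀(a) n for all a ∈ A₋₁,₀; (c) a * (n m) = n (a * m) for all a ∈ A₋₁,₀ and m ∈ M; (d) a * (m n) = (a * m) n for all a ∈ A₋₁,₀ and m ∈ M. Here a * m = w₋₁* a γ(m) w₋₁ and also 1 * m = E₀(m). -/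
/-!
Every direction `n ∈ N ⇒ …` comes from the two intertwining relations `w n = γ(n) w` and
(its adjoint) `n w* = w* γ(n)`, together with the fact that `a ∈ A₋₁,₀` commutes with `γ(n)`.
Conversely, each of (b), (c), (d) evaluated at `a = 1` (and `m = 1`) says `E₀(n) = n`,
which characterizes `N`.
-/

/-- The convolution `a * m = w* a γ(m) w`. -/
def convolution {B F : Type*} [Mul B] [Star B] [FunLike F B B] (w : B) (γ : F) (a m : B) : B :=
  star w * a * γ m * w

section Convolution

variable {B F : Type*} [Monoid B] [StarMul B] [FunLike F B B] {w : B} {γ : F}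

theorem convolution_one_left (m : B) : convolution w γ 1 m = star w * γ m * w := by
  rw [convolution, mul_one]

theorem convolution_one_one [MonoidHomClass F B B] (hw : star w * w = 1) :
    convolution w γ 1 1 = 1 := by
  rw [convolution_one_left, map_one, mul_one, hw]

theorem convolution_mul_left [MulHomClass F B B] {a n : B} (hn : n * star w = star w * γ n)
    (ha : Commute a (γ n)) (m : B) : convolution w γ a (n * m) = n * convolution w γ a m :=
  calc star w * a * γ (n * m) * w = star w * (a * γ n) * γ m * w := by
        simp only [map_mul, mul_assoc]
    _ = n * star w * a * γ m * w := by rw [ha.eq, hn]; simp only [mul_assoc]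
    _ = n * convolution w γ a m := by simp only [convolution, mul_assoc]

theorem convolution_mul_right [MulHomClass F B B] {n : B} (hn : w * n = γ n * w) (a m : B) :
    convolution w γ a (m * n) = convolution w γ a m * n := by
  simp only [convolution, map_mul, mul_assoc, hn]

end Convolution

theorem convolution_eq_smul {B F R : Type*} [Semiring B] [StarMul B] [FunLike F B B]
    [MonoidHomClass F B B] [CommSemiring R] [Algebra R B] {w : B} {γ : F} {a n : B} {c : R}
    (hn : n * star w = star w * γ n) (ha : Commute a (γ n)) (hc : star w * a * w = c • 1) :
    convolution w γ a n = c • n := by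
  simpa [convolution, hc] using convolution_mul_left hn ha 1

theorem mul_star_eq_star_mul_of_intertwines_s18 {B F S : Type*} [Mul B] [StarMul B]
    [FunLike F B B] [StarHomClass F B B] [SetLike S B] [StarMemClass S B]
    {N : S} {w : B} {γ : F} (hint : ∀ n ∈ N, w * n = γ n * w) {n : B} (hn : n ∈ N) :
    n * star w = star w * γ n := by
  simpa [star_mul, map_star] using congrArg star (hint (star n) (star_mem hn))

theorem subalgebra_characterization_via_convolution_general
    {B : Type*} [Ring B] [StarRing B] [Algebra ℂ B] [StarModule ℂ B]
    (M N : StarSubalgebra ℂ B) (hNM : N ≤ M)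
    (γ : B →⋆ₐ[ℂ] B)
    (wm1 : B) (hiso : star wm1 * wm1 = 1)
    (hintN : ∀ n ∈ N, wm1 * n = γ n * wm1)
    (hE0fix : ∀ m ∈ M, star wm1 * γ m * wm1 = m ↔ m ∈ N)
    (A : Set B) (hA : A = {a : B | a ∈ M ∧ ∀ m ∈ M, a * γ m = γ m * a})
    (μ₀ : B → ℂ) (hμ₀ : ∀ a ∈ A, star wm1 * a * wm1 = μ₀ a • (1 : B)) :
    ∀ n ∈ M,
      ((n ∈ N) ↔ (∀ a ∈ A, star wm1 * a * γ n * wm1 = μ₀ a • n)) ∧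
      ((n ∈ N) ↔ (∀ a ∈ A, ∀ m ∈ M,
          star wm1 * a * γ (n * m) * wm1 = n * (star wm1 * a * γ m * wm1))) ∧
      ((n ∈ N) ↔ (∀ a ∈ A, ∀ m ∈ M,
          star wm1 * a * γ (m * n) * wm1 = (star wm1 * a * γ m * wm1) * n)) := by
  subst hA
  intro n hnM
  have one_mem_A : (1 : B) ∈ {a : B | a ∈ M ∧ ∀ m ∈ M, a * γ m = γ m * a} :=
    ⟨M.one_mem, fun m _ => by rw [one_mul, mul_one]⟩
  have star_intertwines : n ∈ N → n * star wm1 = star wm1 * γ n :=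
    mul_star_eq_star_mul_of_intertwines_s18 hintN
  have mem_of_fixed (h : convolution wm1 γ 1 n = n) : n ∈ N :=
    (hE0fix n hnM).mp (by rwa [convolution_one_left] at h)
  have hμ₀_one : μ₀ 1 • (1 : B) = 1 := by rw [← hμ₀ 1 one_mem_A, mul_one, hiso]
  refine ⟨⟨fun hn a ha => convolution_eq_smul (star_intertwines hn) (ha.2 n (hNM hn)) (hμ₀ a ha),
      fun h => mem_of_fixed ?_⟩,
    ⟨fun hn a ha m _ => convolution_mul_left (star_intertwines hn) (ha.2 n (hNM hn)) m,
      fun h => mem_of_fixed ?_⟩,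
    ⟨fun hn a _ m _ => convolution_mul_right (hintN n hn) a m,
      fun h => mem_of_fixed ?_⟩⟩
  · have h1 : convolution wm1 γ 1 n = μ₀ 1 • n := h 1 one_mem_A
    rwa [← smul_one_mul, hμ₀_one, one_mul] at h1
  · have h1 : convolution wm1 γ 1 (n * 1) = n * convolution wm1 γ 1 1 :=
      h 1 one_mem_A 1 M.one_mem
    rwa [mul_one, convolution_one_one hiso, mul_one] at h1
  · have h1 : convolution wm1 γ 1 (1 * n) = convolution wm1 γ 1 1 * n :=
      h 1 one_mem_A 1 M.one_mem
    rwa [one_mul, convolution_one_one hiso, one_mul] at h1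

/-- characterization of `N` via convolution: for `n ∈ M` the
following are equivalent, where `a * m = w₋₁* a γ(m) w₋₁` and `1 * m = E₀(m)`:
(a) `n ∈ N`; (b) `a * n = μ₀(a) n` for all `a ∈ A₋₁,₀`;
(c) `a * (n m) = n (a * m)` for all `a ∈ A₋₁,₀`, `m ∈ M`;
(d) `a * (m n) = (a * m) n` for all `a ∈ A₋₁,₀`, `m ∈ M`.
(`wm1 = w₋₁`, `A` is the relative commutant `A₋₁,₀ = M ∩ γ(M)'`.) -/
theorem subalgebra_characterization_via_convolution
    {B : Type*} [Ring B] [StarRing B] [Algebra ℂ B] [StarModule ℂ B]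
    (M N : StarSubalgebra ℂ B) (hNM : N ≤ M)
    (γ : B →⋆ₐ[ℂ] B) (hγM : ∀ m ∈ M, γ m ∈ N)
    (wm1 : B) (hwN : wm1 ∈ N) (hiso : star wm1 * wm1 = 1)
    (hintN : ∀ n ∈ N, wm1 * n = γ n * wm1)
    (hE0fix : ∀ m ∈ M, star wm1 * γ m * wm1 = m ↔ m ∈ N)
    (A : Set B) (hA : A = {a : B | a ∈ M ∧ ∀ m ∈ M, a * γ m = γ m * a})
    (μ₀ : B → ℂ) (hμ₀ : ∀ a ∈ A, star wm1 * a * wm1 = μ₀ a • (1 : B)) :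
    ∀ n ∈ M,
      ((n ∈ N) ↔ (∀ a ∈ A, star wm1 * a * γ n * wm1 = μ₀ a • n)) ∧
      ((n ∈ N) ↔ (∀ a ∈ A, ∀ m ∈ M,
          star wm1 * a * γ (n * m) * wm1 = n * (star wm1 * a * γ m * wm1))) ∧
      ((n ∈ N) ↔ (∀ a ∈ A, ∀ m ∈ M,
          star wm1 * a * γ (m * n) * wm1 = (star wm1 * a * γ m * wm1) * n)) :=
  subalgebra_characterization_via_convolution_general M N hNM γ wm1 hiso hintN hE0fix A hA μ₀ hμ₀
end
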